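/- Suppose κ is ineffable, d⃗ is a κ-list, C is a club in κ, and j : M → H(θ) is a small embedding for κ with d⃗ ∈ ran(j) and d_{crit(j)} ∈ M (witnessing ineffability). If additionally C ∈ ran(j), then there exists α ∈ C ∩ crit(j) with d_α = d_{crit(j)} ∩ α; that is, j also witnesses the subtlety of κ with respect to d⃗ and C. -/

import Mathlib

/-!
Write `C = j(C₀)`, `d = j(d₀)` and `D = d_crit`. The embedding fixes every ordinal below its
critical point, so `C₀ = C ∩ crit` is unbounded in `crit`, whence `crit ∈ C` because `C` is
closed; likewise `j(D) ∩ crit = D`. Thus in `H(θ)` the ordinal `crit` witnesses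
`∃ α ∈ j(C₀), j(d₀)(α) = j(D) ∩ α`. By elementarity some `α ∈ C₀` has `d₀(α) = D ∩ α` in `M`,
and applying `j`, which fixes `α < crit`, gives `d_α = j(D) ∩ α = D ∩ α`.
-/

open FirstOrder
open scoped Classical
noncomputable section

/-- The first-order language of set theory: one binary relation (membership). -/
def Lmem : FirstOrder.Language :=
  ⟨fun _ => Empty, fun n => match n with | 2 => Unit | _ => Empty⟩

/-- Any set of `ZFSet`s is an `Lmem`-structure via true membership. -/
instance structSet (S : Set ZFSet) : Lmem.Structure S where
  funMap {n} f _ := f.elim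
  RelMap {n} r v :=
    match n, r, v with
    | 2, _, v => ((v 0 : ZFSet) ∈ (v 1 : ZFSet))
    | 0, r, _ => r.elim
    | 1, r, _ => r.elim
    | (_+3), r, _ => r.elim

/-- The universe of sets as an `Lmem`-structure. -/
instance structV : Lmem.Structure ZFSet where
  funMap {n} f _ := f.elim
  RelMap {n} r v :=
    match n, r, v with
    | 2, _, v => ((v 0 : ZFSet) ∈ (v 1 : ZFSet))
    | 0, r, _ => r.elim
    | 1, r, _ => r.elim
    | (_+3), r, _ => r.elim

/-- The (external) cardinality of a ZF-set. -/
noncomputable def zCard (x : ZFSet) : Cardinal := Cardinal.mk x.toSet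

/-- A ZF-set is a cardinal: an ordinal all of whose members have strictly
smaller cardinality. -/
def zIsCard (x : ZFSet) : Prop := x.IsOrdinal ∧ ∀ y ∈ x, zCard y < zCard x

/-- A regular cardinal. -/
def zIsRegular (x : ZFSet) : Prop := zIsCard x ∧ (zCard x).IsRegular

/-- An uncountable regular cardinal. -/
def zIsRegularUncountable (x : ZFSet) : Prop := zIsRegular x ∧ Cardinal.aleph0 < zCard x

/-- A strong limit cardinal. -/
def zIsStrongLimit (x : ZFSet) : Prop := zIsCard x ∧ ∀ y ∈ x, zIsCard y → 2 ^ zCard y < zCard x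

/-- An inaccessible cardinal. -/
def zIsInaccessible (x : ZFSet) : Prop :=
  zIsRegularUncountable x ∧ zIsStrongLimit x

/-- `x` is hereditarily of cardinality less than `θ`, i.e. `x ∈ H(θ)`. -/
def InH (θ x : ZFSet) : Prop := ZFSet.Hereditarily (fun y => zCard y < zCard θ) x

/-- The class `H(θ)` of sets hereditarily of cardinality `< θ`. -/
def HSet (θ : ZFSet) : Set ZFSet := {x | InH θ x}

/-- A (pre-)small embedding into `H(θ)`: a nontrivial elementary embedding
`j : M → H(θ)` with `M ∈ H(θ)` transitive, moving some ordinal of `M`. -/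
structure SmallEmb (θ : ZFSet) where
  M : ZFSet
  trans : M.IsTransitive
  memH : InH θ M
  j : M.toSet ↪ₑ[Lmem] (HSet θ)
  nt : ∃ α, ∃ h : α ∈ M, α.IsOrdinal ∧ α ∈ ((j ⟨α, h⟩ : HSet θ) : ZFSet)

namespace SmallEmb

variable {θ : ZFSet}

/-- Application of the embedding, as a map `ZFSet → ZFSet` (junk value `∅` off `M`). -/
noncomputable def app (e : SmallEmb θ) (x : ZFSet) : ZFSet :=
  if h : x ∈ e.M then ((e.j ⟨x, h⟩ : HSet θ) : ZFSet) else ∅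

/-- The set of ordinals of `M` moved (upwards) by the embedding. -/
def movedSet (e : SmallEmb θ) : Set ZFSet := {α | α.IsOrdinal ∧ α ∈ e.M ∧ α ∈ e.app α}

theorem movedSet_nonempty (e : SmallEmb θ) : e.movedSet.Nonempty := by
  obtain ⟨α, h, h1, h2⟩ := e.nt
  exact ⟨α, h1, h, by simpa [SmallEmb.app, h] using h2⟩

/-- The critical point: the least ordinal moved by the embedding. -/
noncomputable def crit (e : SmallEmb θ) : ZFSet :=
  ZFSet.mem_wf.min e.movedSet e.movedSet_nonempty

/-- The range of the embedding, as a class of `ZFSet`s. -/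
def ran (e : SmallEmb θ) : Set ZFSet := {y | ∃ x, x ∈ e.M ∧ e.app x = y}

/-- The pointwise image `j[δ]` of a set `δ ⊆ M` under the embedding. -/
noncomputable def img (e : SmallEmb θ) (δ : ZFSet) : ZFSet :=
  @ZFSet.image e.app (Classical.allZFSetDefinable _) δ

end SmallEmb

/-- `e` is a small embedding *for* `κ`: it sends its critical point to `κ`. -/
def IsSmallEmbFor {θ : ZFSet} (e : SmallEmb θ) (κ : ZFSet) : Prop :=
  e.app e.crit = κ

/-- Application of a ZF-coded function (set of ordered pairs) to an argument. -/
noncomputable def fapp (f α : ZFSet) : ZFSet :=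
  if h : ∃ x, α.pair x ∈ f then h.choose else ∅

/-- A `κ`-list: a ZF-coded function on `κ` with `d_α ⊆ α` for all `α < κ`. -/
def IsList (κ d : ZFSet) : Prop :=
  ZFSet.IsFunc κ (ZFSet.powerset κ) d ∧ ∀ α ∈ κ, fapp d α ⊆ α

/-- `C` is closed unbounded in `κ` (as a class of `ZFSet`s). -/
def zIsClub (C : Set ZFSet) (κ : ZFSet) : Prop :=
  (∀ x ∈ C, x ∈ κ) ∧
  (∀ α ∈ κ, ∃ β ∈ C, α ∈ β ∨ α = β) ∧
  (∀ α ∈ κ, (∃ β, β ∈ α) →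
    (∀ β ∈ α, ∃ γ, γ ∈ C ∧ γ ∈ α ∧ (β ∈ γ ∨ β = γ)) → α ∈ C)

/-- `S` is stationary in `κ`: it meets every club subset (coded in `V`) of `κ`. -/
def zIsStationary (S : Set ZFSet) (κ : ZFSet) : Prop :=
  ∀ C : ZFSet, zIsClub C.toSet κ → ∃ x, x ∈ S ∧ x ∈ C

/-- A ZF-coded club. -/
def zClub (C κ : ZFSet) : Prop := zIsClub C.toSet κ

/-- κ is ineffable: regular uncountable, and for every κ-list there is D ⊆ κ such that
`{α < κ | d_α = D ∩ α}` is stationary in κ. -/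
def zIneffable (κ : ZFSet) : Prop :=
  zIsRegularUncountable κ ∧
  ∀ d : ZFSet, IsList κ d → ∃ D : ZFSet, D ⊆ κ ∧
    zIsStationary {α : ZFSet | α ∈ κ ∧ fapp d α = D ∩ α} κ

open FirstOrder.Language

namespace FirstOrder.Language.ElementaryEmbedding

variable {L : Language} {M N : Type*} [L.Structure M] [L.Structure N] (f : M ↪ₑ[L] N)
  {α : Type*} {n : ℕ}

theorem exists_realize_comp_iff (φ : L.BoundedFormula α n) (v : α → M) :
    (∃ xs : Fin n → N, φ.Realize (f ∘ v) xs) ↔ ∃ xs : Fin n → M, φ.Realize v xs := by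
  simpa only [BoundedFormula.realize_exs] using f.map_formula φ.exs v

theorem forall_realize_comp_iff (φ : L.BoundedFormula α n) (v : α → M) :
    (∀ xs : Fin n → N, φ.Realize (f ∘ v) xs) ↔ ∀ xs : Fin n → M, φ.Realize v xs := by
  simpa only [BoundedFormula.realize_alls] using f.map_formula φ.alls v

end FirstOrder.Language.ElementaryEmbedding

section Formulas

local notation:60 t " ∈' " u => Relations.boundedFormula₂ (Unit.unit : Lmem.Relations 2) t u

local notation:max "fv" i:max => Term.var (Sum.inl i)

@[simp] lemma realize_memAtom {S : Set ZFSet} {m n : ℕ} (t u : Lmem.Term (Fin m ⊕ Fin n))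
    (v : Fin m → S) (xs : Fin n → S) :
    (t ∈' u).Realize v xs ↔
      ((t.realize (Sum.elim v xs) : S) : ZFSet) ∈ ((u.realize (Sum.elim v xs) : S) : ZFSet) :=
  Iff.rfl

def memFormula : Lmem.BoundedFormula (Fin 1) 1 := &0 ∈' fv 0

def ordinalFormula : Lmem.BoundedFormula (Fin 1) 3 :=
  (&0 ∈' fv 0) ⟹ (&1 ∈' &0) ⟹ ((&1 ∈' fv 0) ⊓ ((&2 ∈' &1) ⟹ (&2 ∈' &0)))

def existsMemGeFormula : Lmem.BoundedFormula (Fin 2) 1 :=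
  (&0 ∈' fv 1) ⊓ ((fv 0 ∈' &0) ⊔ (fv 0 =' &0))

/-- `p` is the Kuratowski pair `{{a}, {a, b}}`, as seen from `S`. Naming the two members of `p`
by existential quantifiers makes this absolute for every transitive `S`, closed under pairing
or not (`isPairIn_iff`). -/
def IsPairIn (S : Set ZFSet) (p a b : ZFSet) : Prop :=
  ∃ s ∈ S, ∃ t ∈ S, s ∈ p ∧ t ∈ p ∧ (∀ w ∈ S, w ∈ p → w = s ∨ w = t) ∧
    (∀ u ∈ S, u ∈ s ↔ u = a) ∧ (∀ u ∈ S, u ∈ t ↔ u = a ∨ u = b)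

def IsInterIn (S : Set ZFSet) (x y z : ZFSet) : Prop :=
  ∀ w ∈ S, w ∈ x ↔ w ∈ y ∧ w ∈ z

def pairInterFormula : Lmem.BoundedFormula (Fin 3) 3 :=
  (&0 ∈' fv 0) ⊓ (&2 ∈' fv 1) ⊓
    ∃' ∃' ((&3 ∈' &2) ⊓ (&4 ∈' &2) ⊓ (∀' ((&5 ∈' &2) ⟹ ((&5 =' &3) ⊔ (&5 =' &4)))) ⊓
      (∀' ((&5 ∈' &3) ⇔ (&5 =' &0))) ⊓ (∀' ((&5 ∈' &4) ⇔ ((&5 =' &0) ⊔ (&5 =' &1))))) ⊓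
    ∀' ((&3 ∈' &1) ⇔ ((&3 ∈' fv 2) ⊓ (&3 ∈' &0)))

variable {S : Set ZFSet}

lemma realize_memFormula (v xs : Fin 1 → S) :
    memFormula.Realize v xs ↔ (xs 0 : ZFSet) ∈ (v 0 : ZFSet) := Iff.rfl

lemma realize_ordinalFormula (v : Fin 1 → S) (xs : Fin 3 → S) :
    ordinalFormula.Realize v xs ↔
      ((xs 0 : ZFSet) ∈ (v 0 : ZFSet) → (xs 1 : ZFSet) ∈ (xs 0 : ZFSet) →
        (xs 1 : ZFSet) ∈ (v 0 : ZFSet) ∧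
          ((xs 2 : ZFSet) ∈ (xs 1 : ZFSet) → (xs 2 : ZFSet) ∈ (xs 0 : ZFSet))) := by
  simp [ordinalFormula]

lemma realize_existsMemGeFormula (v : Fin 2 → S) (xs : Fin 1 → S) :
    existsMemGeFormula.Realize v xs ↔ (xs 0 : ZFSet) ∈ (v 1 : ZFSet) ∧
      ((v 0 : ZFSet) ∈ (xs 0 : ZFSet) ∨ (v 0 : ZFSet) = xs 0) := by
  simp [existsMemGeFormula, Subtype.ext_iff]

lemma realize_pairInterFormula (v xs : Fin 3 → S) :
    pairInterFormula.Realize v xs ↔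
      (xs 0 : ZFSet) ∈ (v 0 : ZFSet) ∧ (xs 2 : ZFSet) ∈ (v 1 : ZFSet) ∧
        IsPairIn S (xs 2) (xs 0) (xs 1) ∧ IsInterIn S (xs 1) (v 2) (xs 0) := by
  simp +decide [pairInterFormula, IsPairIn, IsInterIn, Fin.snoc, Subtype.ext_iff, and_assoc,
    Fin.castPred, Fin.castLT]
  aesop

end Formulas

section Absoluteness

variable {S : Set ZFSet}

lemma eq_of_forall_mem_iff {x y : ZFSet} (hx : ∀ u ∈ x, u ∈ S) (hy : ∀ u ∈ y, u ∈ S)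
    (h : ∀ u ∈ S, u ∈ x ↔ u ∈ y) : x = y :=
  ZFSet.ext fun u => ⟨fun hu => (h u (hx u hu)).1 hu, fun hu => (h u (hy u hu)).2 hu⟩

lemma isPairIn_iff (hS : ∀ x ∈ S, ∀ y ∈ x, y ∈ S) {p a b : ZFSet} (hp : p ∈ S) (ha : a ∈ S)
    (hb : b ∈ S) : IsPairIn S p a b ↔ p = ZFSet.pair a b := by
  have hsingleton : ∀ u ∈ ({a} : ZFSet), u ∈ S := by simpa using ha
  have hdoubleton : ∀ u ∈ ({a, b} : ZFSet), u ∈ S := by simpa using ⟨ha, hb⟩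
  constructor
  · rintro ⟨s, hsS, t, htS, hsp, htp, hpst, hs, ht⟩
    obtain rfl : s = {a} := eq_of_forall_mem_iff (hS s hsS) hsingleton (by simpa using hs)
    obtain rfl : t = {a, b} := eq_of_forall_mem_iff (hS t htS) hdoubleton (by simpa using ht)
    refine eq_of_forall_mem_iff (hS p hp) (fun u hu => ?_) fun w hw => ?_
    · rcases ZFSet.mem_pair.1 hu with rfl | rfl <;> assumption
    · simpa [ZFSet.pair] using ⟨hpst w hw, by rintro (rfl | rfl) <;> assumption⟩
  · rintro rfl
    refine ⟨{a}, hS _ hp _ (by simp [ZFSet.pair]), {a, b}, hS _ hp _ (by simp [ZFSet.pair]),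
      by simp [ZFSet.pair], by simp [ZFSet.pair], fun w _ hw => by simpa [ZFSet.pair] using hw,
      fun u _ => ZFSet.mem_singleton, fun u _ => ZFSet.mem_pair⟩

lemma isInterIn_iff (hS : ∀ x ∈ S, ∀ y ∈ x, y ∈ S) {x y z : ZFSet} (hx : x ∈ S) (hy : y ∈ S) :
    IsInterIn S x y z ↔ x = y ∩ z := by
  refine ⟨fun h => eq_of_forall_mem_iff (hS x hx) (fun u hu => hS y hy u (ZFSet.mem_inter.1 hu).1)
    fun u hu => (h u hu).trans ZFSet.mem_inter.symm, ?_⟩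
  rintro rfl w _
  exact ZFSet.mem_inter

lemma realize_pairInterFormula_iff_eq (hS : ∀ x ∈ S, ∀ y ∈ x, y ∈ S) (v xs : Fin 3 → S) :
    pairInterFormula.Realize v xs ↔
      (xs 0 : ZFSet) ∈ (v 0 : ZFSet) ∧ (xs 2 : ZFSet) ∈ (v 1 : ZFSet) ∧
        (xs 2 : ZFSet) = ZFSet.pair (xs 0) (xs 1) ∧ (xs 1 : ZFSet) = (v 2 : ZFSet) ∩ xs 0 := by
  rw [realize_pairInterFormula, isPairIn_iff hS (xs 2).2 (xs 0).2 (xs 1).2,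
    isInterIn_iff hS (xs 1).2 (v 2).2]

end Absoluteness

section Fapp

variable {x y f a b : ZFSet}

lemma pair_fapp_mem (hf : ZFSet.IsFunc x y f) (ha : a ∈ x) : ZFSet.pair a (fapp f a) ∈ f := by
  have h : ∃ b, ZFSet.pair a b ∈ f := (hf.2 a ha).exists
  rw [fapp, dif_pos h]
  exact h.choose_spec

lemma fapp_eq_of_pair_mem (hf : ZFSet.IsFunc x y f) (h : ZFSet.pair a b ∈ f) : fapp f a = b := by
  have ha : a ∈ x := (ZFSet.pair_mem_prod.1 (hf.1 h)).1
  exact (hf.2 a ha).unique (pair_fapp_mem hf ha) h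

end Fapp

lemma mem_HSet_of_mem {θ x y : ZFSet} (hx : x ∈ HSet θ) (hy : y ∈ x) : y ∈ HSet θ :=
  ZFSet.Hereditarily.mem hx hy

namespace SmallEmb

variable {θ : ZFSet} (e : SmallEmb θ) {x y : ZFSet}

lemma mem_M_of_mem (hx : x ∈ e.M) (hy : y ∈ x) : y ∈ e.M :=
  e.trans.mem_trans hy hx

@[simp] lemma coe_j_apply (u : e.M.toSet) : ((e.j u : HSet θ) : ZFSet) = e.app u :=
  (dif_pos u.2 : e.app u = _).symm

lemma app_mem_HSet (hx : x ∈ e.M) : e.app x ∈ HSet θ := by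
  rw [← e.coe_j_apply ⟨x, hx⟩]
  exact (e.j ⟨x, hx⟩).2

lemma app_mem_app_iff (hx : x ∈ e.M) (hy : y ∈ e.M) : e.app x ∈ e.app y ↔ x ∈ y := by
  rw [← e.coe_j_apply ⟨x, hx⟩, ← e.coe_j_apply ⟨y, hy⟩]
  exact e.j.map_rel (n := 2) () ![⟨x, hx⟩, ⟨y, hy⟩]

lemma subset_of_app_subset (hx : x ∈ e.M) (hy : y ∈ e.M) (h : e.app x ⊆ e.app y) : x ⊆ y :=
  fun u hu => by
    have huM := e.mem_M_of_mem hx hu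
    exact (e.app_mem_app_iff huM hy).1 (h ((e.app_mem_app_iff huM hx).2 hu))

lemma nonempty_of_nonempty_app (hx : x ∈ e.M) (h : (e.app x).Nonempty) : x.Nonempty := by
  obtain ⟨u, hu⟩ := h
  obtain ⟨xs, hxs⟩ := (e.j.exists_realize_comp_iff memFormula ![⟨x, hx⟩]).1
    ⟨![⟨u, mem_HSet_of_mem (e.app_mem_HSet hx) hu⟩], by simpa [realize_memFormula] using hu⟩
  exact ⟨xs 0, by simpa [realize_memFormula] using hxs⟩

lemma isOrdinal_app (hx : x ∈ e.M) (h : x.IsOrdinal) : (e.app x).IsOrdinal := by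
  have hM : ∀ xs : Fin 3 → e.M.toSet, ordinalFormula.Realize ![⟨x, hx⟩] xs := fun xs => by
    simp only [realize_ordinalFormula]
    exact fun h0 h1 => ⟨h.mem_trans h1 h0, fun h2 => (h.mem h0).mem_trans h2 h1⟩
  have hH := (e.j.forall_realize_comp_iff ordinalFormula ![⟨x, hx⟩]).2 hM
  have hxH := e.app_mem_HSet hx
  refine ⟨fun a ha b hb => ?_, fun {c b a} hc hb ha => ?_⟩
  · have haH := mem_HSet_of_mem hxH ha
    have hbH := mem_HSet_of_mem haH hb
    simpa [realize_ordinalFormula, ha, hb] using hH ![⟨a, haH⟩, ⟨b, hbH⟩, ⟨b, hbH⟩]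
  · have haH := mem_HSet_of_mem hxH ha
    have hbH := mem_HSet_of_mem haH hb
    have habc := hH ![⟨a, haH⟩, ⟨b, hbH⟩, ⟨c, mem_HSet_of_mem hbH hc⟩]
    simp [realize_ordinalFormula, ha, hb] at habc
    exact habc.2 hc

lemma exists_mem_ge_of_app (hx : x ∈ e.M) (hy : y ∈ e.M)
    (h : ∃ γ ∈ e.app y, e.app x ∈ γ ∨ e.app x = γ) : ∃ γ ∈ y, x ∈ γ ∨ x = γ := by
  obtain ⟨γ, hγ, hxγ⟩ := h
  obtain ⟨xs, hxs⟩ := (e.j.exists_realize_comp_iff existsMemGeFormula ![⟨x, hx⟩, ⟨y, hy⟩]).1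
    ⟨![⟨γ, mem_HSet_of_mem (e.app_mem_HSet hy) hγ⟩], by
      simpa [realize_existsMemGeFormula, hγ] using hxγ⟩
  exact ⟨xs 0, by simpa [realize_existsMemGeFormula] using hxs⟩

lemma exists_pair_inter_mem {C₀ d₀ D : ZFSet} (hC₀ : C₀ ∈ e.M) (hd₀ : d₀ ∈ e.M) (hD : D ∈ e.M)
    (h : ∃ α ∈ e.app C₀, ZFSet.pair α (e.app D ∩ α) ∈ e.app d₀) :
    ∃ α ∈ C₀, ZFSet.pair (e.app α) (e.app D ∩ e.app α) ∈ e.app d₀ := by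
  have hHtrans : ∀ x ∈ HSet θ, ∀ y ∈ x, y ∈ HSet θ := fun _ hx _ hy => mem_HSet_of_mem hx hy
  have hMtrans : ∀ x ∈ e.M.toSet, ∀ y ∈ x, y ∈ e.M.toSet := fun _ hx _ hy => e.mem_M_of_mem hx hy
  obtain ⟨α, hα, hp⟩ := h
  have hpH : ZFSet.pair α (e.app D ∩ α) ∈ HSet θ := mem_HSet_of_mem (e.app_mem_HSet hd₀) hp
  have hαH : α ∈ HSet θ := mem_HSet_of_mem (e.app_mem_HSet hC₀) hα
  have hxH : e.app D ∩ α ∈ HSet θ :=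
    mem_HSet_of_mem (mem_HSet_of_mem hpH (by simp [ZFSet.pair] : {α, e.app D ∩ α} ∈ _)) (by simp)
  let v : Fin 3 → e.M.toSet := ![⟨C₀, hC₀⟩, ⟨d₀, hd₀⟩, ⟨D, hD⟩]
  obtain ⟨xs, hxs⟩ := (e.j.exists_realize_comp_iff pairInterFormula v).1
    ⟨![⟨α, hαH⟩, ⟨_, hxH⟩, ⟨_, hpH⟩], by
      simpa [v, realize_pairInterFormula_iff_eq hHtrans, hα] using hp⟩
  have hj := (e.j.map_boundedFormula pairInterFormula v xs).2 hxs
  rw [realize_pairInterFormula_iff_eq hMtrans] at hxs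
  rw [realize_pairInterFormula_iff_eq hHtrans] at hj
  simp only [Function.comp_apply, coe_j_apply, v, Matrix.cons_val] at hj
  obtain ⟨-, hpd, hpair, hinter⟩ := hj
  exact ⟨xs 0, hxs.1, by rwa [← hinter, ← hpair]⟩

lemma crit_mem_movedSet : e.crit ∈ e.movedSet :=
  ZFSet.mem_wf.min_mem _ e.movedSet_nonempty

lemma isOrdinal_crit : e.crit.IsOrdinal := e.crit_mem_movedSet.1

lemma crit_mem_M : e.crit ∈ e.M := e.crit_mem_movedSet.2.1

lemma crit_mem_app_crit : e.crit ∈ e.app e.crit := e.crit_mem_movedSet.2.2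

lemma notMem_movedSet_of_mem_crit (h : x ∈ e.crit) : x ∉ e.movedSet :=
  fun hx => ZFSet.mem_wf.not_lt_min _ hx h

lemma crit_nonempty : e.crit.Nonempty :=
  e.nonempty_of_nonempty_app e.crit_mem_M ⟨_, e.crit_mem_app_crit⟩

lemma app_eq_self_of_mem_crit (hx : x ∈ e.M) (h : x ∈ e.crit) : e.app x = x := by
  induction x using ZFSet.inductionOn with
  | _ x ih =>
  have hxo : x.IsOrdinal := e.isOrdinal_crit.mem h
  have hsub : x ⊆ e.app x := fun y hy => by
    have hyM := e.mem_M_of_mem hx hy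
    rw [← ih y hy hyM (e.isOrdinal_crit.mem_trans hy h)]
    exact (e.app_mem_app_iff hyM hx).2 hy
  rcases (hxo.subset_iff_eq_or_mem (e.isOrdinal_app hx hxo)).1 hsub with hx' | hx'
  · exact hx'.symm
  · exact absurd ⟨hxo, hx, hx'⟩ (e.notMem_movedSet_of_mem_crit h)

lemma mem_app_of_mem_crit (hy : y ∈ e.M) (hxy : x ∈ y) (hx : x ∈ e.crit) : x ∈ e.app y := by
  have hxM := e.mem_M_of_mem hy hxy
  simpa [e.app_eq_self_of_mem_crit hxM hx] using (e.app_mem_app_iff hxM hy).2 hxy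

lemma app_inter_of_subset_crit (hx : x ∈ e.M) (hy : y ⊆ e.crit) : e.app x ∩ y = x ∩ y := by
  ext u
  simp only [ZFSet.mem_inter, and_congr_left_iff]
  intro hu
  have huM := e.mem_M_of_mem e.crit_mem_M (hy hu)
  rw [← e.app_mem_app_iff huM hx, e.app_eq_self_of_mem_crit huM (hy hu)]

lemma crit_mem_of_zClub {C₀ : ZFSet} (hC₀ : C₀ ∈ e.M) (hC : zClub (e.app C₀) (e.app e.crit)) :
    e.crit ∈ e.app C₀ := by
  have hC₀crit : C₀ ⊆ e.crit := e.subset_of_app_subset hC₀ e.crit_mem_M fun u hu => hC.1 u hu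
  refine hC.2.2 e.crit e.crit_mem_app_crit e.crit_nonempty fun β hβ => ?_
  have hβM := e.mem_M_of_mem e.crit_mem_M hβ
  obtain ⟨γ, hγ, hβγ⟩ := e.exists_mem_ge_of_app hβM hC₀ <| by
    rw [e.app_eq_self_of_mem_crit hβM hβ]
    exact hC.2.1 β (e.mem_app_of_mem_crit e.crit_mem_M hβ hβ)
  exact ⟨γ, e.mem_app_of_mem_crit hC₀ hγ (hC₀crit hγ), hC₀crit hγ, hβγ⟩

end SmallEmb

theorem stmt8_general (κ θ d C : ZFSet) (e : SmallEmb θ)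
    (hd : IsList κ d) (hC : zClub C κ)
    (hj : IsSmallEmbFor e κ) (hran : d ∈ e.ran) (hM : fapp d e.crit ∈ e.M)
    (hCran : C ∈ e.ran) :
    ∃ α : ZFSet, α ∈ C ∧ α ∈ e.crit ∧ fapp d α = fapp d e.crit ∩ α := by
  obtain ⟨d₀, hd₀, rfl⟩ := hran
  obtain ⟨C₀, hC₀, rfl⟩ := hCran
  subst hj
  have hcrit := e.crit_mem_app_crit
  have hD : e.app (fapp (e.app d₀) e.crit) ∩ e.crit = fapp (e.app d₀) e.crit := by
    rw [e.app_inter_of_subset_crit hM subset_rfl]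
    exact ZFSet.inter_eq_left_of_subset (hd.2 _ hcrit)
  obtain ⟨α, hαC₀, hα⟩ := e.exists_pair_inter_mem hC₀ hd₀ hM
    ⟨e.crit, e.crit_mem_of_zClub hC₀ hC, by rw [hD]; exact pair_fapp_mem hd.1 hcrit⟩
  have hαcrit : α ∈ e.crit :=
    e.subset_of_app_subset hC₀ e.crit_mem_M (fun u hu => hC.1 u hu) hαC₀
  rw [e.app_eq_self_of_mem_crit (e.mem_M_of_mem hC₀ hαC₀) hαcrit,
    e.app_inter_of_subset_crit hM (e.isOrdinal_crit.subset_of_mem hαcrit)] at hα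
  exact ⟨α, e.mem_app_of_mem_crit hC₀ hαC₀ hαcrit, hαcrit, fapp_eq_of_pair_mem hd.1 hα⟩

/-- a small embedding witnessing the ineffability of κ with respect to a
κ-list, whose range also contains a given club C, witnesses the subtlety of κ with
respect to the list and C. -/
theorem stmt8 (κ θ d C : ZFSet) (e : SmallEmb θ)
    (hineff : zIneffable κ) (hd : IsList κ d) (hC : zClub C κ)
    (hj : IsSmallEmbFor e κ) (hran : d ∈ e.ran) (hM : fapp d e.crit ∈ e.M)
    (hCran : C ∈ e.ran) :
    ∃ α : ZFSet, α ∈ C ∧ α ∈ e.crit ∧ fapp d α = fapp d e.crit ∩ α :=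
  stmt8_general κ θ d C e hd hC hj hran hM hCran
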